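/- arXiv:2112.01960 — 5 statements merged into one kernel-verified Lean document; each statement's English description precedes it below -/
import Mathlib

section
/- Let S=(P,L,I) be a connected rank-two incidence geometry in which every line is incident to at least one point. If some cone graph of S is rigid in ℝ², then every cone graph of S is rigid in ℝ². -/
/-- Dot product on `ℝ × ℝ`. -/
def dot (a b : ℝ × ℝ) : ℝ := a.1 * b.1 + a.2 * b.2

/-- Rotation of a plane vector by 90 degrees: `(x, y)ᗮ = (-y, x)`. -/
def perp (a : ℝ × ℝ) : ℝ × ℝ := (-a.2, a.1)

/-- A trivial infinitesimal motion of a framework `ρ`. -/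
def IsTrivialMotion {V : Type*} (ρ m : V → ℝ × ℝ) : Prop :=
  ∃ (a : ℝ) (t : ℝ × ℝ), ∀ v, m v = a • perp (ρ v) + t

/-- An infinitesimal motion of the framework `ρ` of the graph with edge set `E`. -/
def IsInfMotion {V : Type*} (E : Finset (Sym2 V)) (ρ m : V → ℝ × ℝ) : Prop :=
  ∀ u v : V, s(u, v) ∈ E → dot (ρ u - ρ v) (m u - m v) = 0

/-- A framework is infinitesimally rigid if all its infinitesimal motions are trivial. -/
def InfRigid {V : Type*} (E : Finset (Sym2 V)) (ρ : V → ℝ × ℝ) : Prop :=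
  ∀ m : V → ℝ × ℝ, IsInfMotion E ρ m → IsTrivialMotion ρ m

/-- A framework is generic if its `2|V|` coordinates are algebraically independent over `ℚ`. -/
def Generic {V : Type*} (ρ : V → ℝ × ℝ) : Prop :=
  AlgebraicIndependent ℚ (fun p : V × Bool => if p.2 then (ρ p.1).1 else (ρ p.1).2)

/-- A graph is rigid in `ℝ²` if every generic framework of it is infinitesimally rigid. -/
def RigidGraph {V : Type*} (E : Finset (Sym2 V)) : Prop :=
  ∀ ρ : V → ℝ × ℝ, Generic ρ → InfRigid E ρ

/-- The bipartite incidence graph of an incidence geometry `(P, L, I)`. -/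
def incGraph {P L : Type*} (I : Finset (P × L)) : SimpleGraph (P ⊕ L) where
  Adj x y := (∃ p ℓ, (p, ℓ) ∈ I ∧ x = Sum.inl p ∧ y = Sum.inr ℓ) ∨
             (∃ p ℓ, (p, ℓ) ∈ I ∧ x = Sum.inr ℓ ∧ y = Sum.inl p)
  symm := by
    constructor
    rintro x y (⟨p, ℓ, h, rfl, rfl⟩ | ⟨p, ℓ, h, rfl, rfl⟩)
    · exact Or.inr ⟨p, ℓ, h, rfl, rfl⟩
    · exact Or.inl ⟨p, ℓ, h, rfl, rfl⟩
  loopless := by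
    constructor
    rintro x (⟨p, ℓ, h, rfl, h2⟩ | ⟨p, ℓ, h, rfl, h2⟩) <;> simp at h2

/-- The cone graph of an incidence geometry `(P, L, I)` determined by the choice `pc` of an
inner vertex `pc ℓ` for each line `ℓ`: its vertices are `P ⊕ L` (with `Sum.inr ℓ` the cone
vertex `c_ℓ` of `ℓ`), and its edges join the cone vertex of each line `ℓ` to all points of
`ℓ`, and the inner vertex of `ℓ` to all other points of `ℓ`. -/
def coneEdges {P L : Type*} [DecidableEq P] [DecidableEq L] (I : Finset (P × L)) (pc : L → P) :
    Finset (Sym2 (P ⊕ L)) :=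
  I.image (fun pl => s((Sum.inr pl.2 : P ⊕ L), Sum.inl pl.1)) ∪
    (I.filter (fun pl => pl.1 ≠ pc pl.2)).image
      (fun pl => s((Sum.inl (pc pl.2) : P ⊕ L), Sum.inl pl.1))

lemma dot_perp_sub (u v : ℝ × ℝ) (a : ℝ) :
    dot (u - v) ((a • perp u) - (a • perp v)) = 0 := by
  simp [dot, perp]; ring

lemma dot_of_trivial (u v mu mv : ℝ × ℝ) (a : ℝ) (t : ℝ × ℝ)
    (hu : mu = a • perp u + t) (hv : mv = a • perp v + t) :
    dot (u - v) (mu - mv) = 0 := by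
  subst hu hv; simp [dot, perp]; ring

lemma motion_shift (u v mu mv : ℝ × ℝ) (a : ℝ) (t : ℝ × ℝ)
    (h : dot (u - v) (mu - mv) = 0) (hu : mu = a • perp u + t) :
    dot (u - v) (mv - (a • perp v + t)) = 0 := by
  subst hu
  simp only [dot, perp, Prod.fst_sub, Prod.snd_sub, Prod.fst_add, Prod.snd_add,
    Prod.smul_fst, Prod.smul_snd, smul_eq_mul] at h ⊢
  linear_combination -h

lemma coord_ne_of_generic {V : Type*} {ρ : V → ℝ × ℝ} (h : Generic ρ) {u v : V} (huv : u ≠ v) :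
    (ρ u).1 ≠ (ρ v).1 := by
  intro he
  have hinj : Function.Injective (fun p : V × Bool => if p.2 then (ρ p.1).1 else (ρ p.1).2) :=
    h.injective
  have : ((u, true) : V × Bool) = (v, true) := hinj (by simpa using he)
  exact huv (by simpa using this)

open MvPolynomial in
lemma det_ne_of_generic {V : Type*} {ρ : V → ℝ × ℝ} (h : Generic ρ)
    {u v w : V} (huv : u ≠ v) (huw : u ≠ w) (hvw : v ≠ w) :
    ((ρ v).1 - (ρ u).1) * ((ρ w).2 - (ρ u).2)
      - ((ρ w).1 - (ρ u).1) * ((ρ v).2 - (ρ u).2) ≠ 0 := by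
  classical
  set f : V × Bool → ℝ := fun p => if p.2 then (ρ p.1).1 else (ρ p.1).2 with hf
  intro hdet
  set Q : MvPolynomial (V × Bool) ℚ :=
    (X (v, true) - X (u, true)) * (X (w, false) - X (u, false))
      - (X (w, true) - X (u, true)) * (X (v, false) - X (u, false)) with hQ
  have hinj : Function.Injective (MvPolynomial.aeval f : MvPolynomial (V × Bool) ℚ →ₐ[ℚ] ℝ) := h
  have hval : (MvPolynomial.aeval f) Q = 0 := by
    simp only [hQ, map_sub, map_mul, aeval_X, hf]
    simpa using hdet
  have hQ0 : Q = 0 := hinj (by rw [hval, map_zero])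
  have := congrArg (eval (fun p : V × Bool =>
      if p = (v, true) ∨ p = (w, false) then (1 : ℚ) else 0)) hQ0
  simp only [hQ, map_sub, map_mul, eval_X, map_zero] at this
  simp [Prod.mk.injEq, huv, huw, hvw, hvw.symm] at this

lemma exists_trivial_match (c p mc mp : ℝ × ℝ) (hne : c.1 ≠ p.1)
    (h : dot (c - p) (mc - mp) = 0) :
    ∃ (a : ℝ) (t : ℝ × ℝ), mc = a • perp c + t ∧ mp = a • perp p + t := by
  have h0 : c.1 - p.1 ≠ 0 := sub_ne_zero.mpr hne
  have hD : (c.1 - p.1) ^ 2 + (c.2 - p.2) ^ 2 ≠ 0 := by positivity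
  set a : ℝ := (-(c.2 - p.2) * (mc.1 - mp.1) + (c.1 - p.1) * (mc.2 - mp.2)) /
      ((c.1 - p.1) ^ 2 + (c.2 - p.2) ^ 2) with ha
  have h' : (c.1 - p.1) * (mc.1 - mp.1) + (c.2 - p.2) * (mc.2 - mp.2) = 0 := by
    simpa [dot] using h
  have e1 : mc.1 - mp.1 = a * (-(c.2 - p.2)) := by
    rw [ha, div_mul_eq_mul_div, eq_div_iff hD]
    linear_combination (c.1 - p.1) * h'
  have e2 : mc.2 - mp.2 = a * (c.1 - p.1) := by
    rw [ha, div_mul_eq_mul_div, eq_div_iff hD]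
    linear_combination (c.2 - p.2) * h'
  refine ⟨a, mc - a • perp c, ?_, ?_⟩
  · abel
  · have c1 : mp.1 = (a • perp p + (mc - a • perp c)).1 := by
      simp [perp]; linear_combination -e1
    have c2 : mp.2 = (a • perp p + (mc - a • perp c)).2 := by
      simp [perp]; linear_combination -e2
    exact Prod.ext c1 c2

lemma point_kill (A B x : ℝ × ℝ) (hA : dot A x = 0) (hB : dot B x = 0)
    (hdet : A.1 * B.2 - A.2 * B.1 ≠ 0) : x = 0 := by
  simp only [dot] at hA hB
  have h1 : (A.1 * B.2 - A.2 * B.1) * x.1 = 0 := by linear_combination B.2 * hA - A.2 * hB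
  have h2 : (A.1 * B.2 - A.2 * B.1) * x.2 = 0 := by linear_combination A.1 * hB - B.1 * hA
  exact Prod.ext ((mul_eq_zero.mp h1).resolve_left hdet) ((mul_eq_zero.mp h2).resolve_left hdet)

/-- On a generic framework, any infinitesimal motion of a cone graph restricts to a
rigid-body motion on each line gadget. -/
lemma line_trivial {P L : Type*} [DecidableEq P] [DecidableEq L]
    (I : Finset (P × L)) (pc : L → P) (hpc : ∀ ℓ, (pc ℓ, ℓ) ∈ I)
    (ρ m : P ⊕ L → ℝ × ℝ) (hg : Generic ρ)
    (hm : IsInfMotion (coneEdges I pc) ρ m) (ℓ : L) :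
    ∃ (a : ℝ) (t : ℝ × ℝ), m (Sum.inr ℓ) = a • perp (ρ (Sum.inr ℓ)) + t ∧
      ∀ q, (q, ℓ) ∈ I → m (Sum.inl q) = a • perp (ρ (Sum.inl q)) + t := by
  set c : P ⊕ L := Sum.inr ℓ with hc
  set p : P ⊕ L := Sum.inl (pc ℓ) with hp
  have hedge_cp : s(c, p) ∈ coneEdges I pc :=
    Finset.mem_union_left _ (Finset.mem_image.mpr ⟨(pc ℓ, ℓ), hpc ℓ, rfl⟩)
  have hne : (ρ c).1 ≠ (ρ p).1 := coord_ne_of_generic hg (by simp [hc, hp])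
  obtain ⟨a, t, h1, h2⟩ :=
    exists_trivial_match (ρ c) (ρ p) (m c) (m p) hne (hm c p hedge_cp)
  refine ⟨a, t, h1, fun q hq => ?_⟩
  by_cases hq' : q = pc ℓ
  · subst hq'; exact h2
  · have hedge_cq : s(c, Sum.inl q) ∈ coneEdges I pc :=
      Finset.mem_union_left _ (Finset.mem_image.mpr ⟨(q, ℓ), hq, rfl⟩)
    have hedge_pq : s(p, Sum.inl q) ∈ coneEdges I pc :=
      Finset.mem_union_right _
        (Finset.mem_image.mpr ⟨(q, ℓ), Finset.mem_filter.mpr ⟨hq, hq'⟩, rfl⟩)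
    have hA : dot (ρ c - ρ (Sum.inl q))
        (m (Sum.inl q) - (a • perp (ρ (Sum.inl q)) + t)) = 0 :=
      motion_shift _ _ _ _ _ _ (hm c (Sum.inl q) hedge_cq) h1
    have hB : dot (ρ p - ρ (Sum.inl q))
        (m (Sum.inl q) - (a • perp (ρ (Sum.inl q)) + t)) = 0 :=
      motion_shift _ _ _ _ _ _ (hm p (Sum.inl q) hedge_pq) h2
    have hdet : (ρ c - ρ (Sum.inl q)).1 * (ρ p - ρ (Sum.inl q)).2
        - (ρ c - ρ (Sum.inl q)).2 * (ρ p - ρ (Sum.inl q)).1 ≠ 0 := by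
      have hd := det_ne_of_generic hg (u := Sum.inl q) (v := c) (w := p)
        (by simp [hc]) (by simp [hp, Ne, hq']) (by simp [hc, hp])
      intro h0
      apply hd
      simp only [Prod.fst_sub, Prod.snd_sub] at h0
      linear_combination h0
    have hx := point_kill _ _ _ hA hB hdet
    have := sub_eq_zero.mp hx
    exact this

/-- Let `S = (P, L, I)` be a connected rank-two incidence geometry in which
every line is incident to at least one point. If some cone graph of `S` is rigid in `ℝ²`,
then every cone graph of `S` is rigid in `ℝ²`. -/
theorem cone_graph_rigidity_independent_of_choice
    {P L : Type*} [Fintype P] [Fintype L] [DecidableEq P] [DecidableEq L]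
    (I : Finset (P × L))
    (hline : ∀ ℓ : L, ∃ p : P, (p, ℓ) ∈ I)
    (hconn : (incGraph I).Connected)
    (pc₁ pc₂ : L → P)
    (hpc₁ : ∀ ℓ, (pc₁ ℓ, ℓ) ∈ I) (hpc₂ : ∀ ℓ, (pc₂ ℓ, ℓ) ∈ I)
    (hrig : RigidGraph (coneEdges I pc₁)) :
    RigidGraph (coneEdges I pc₂) := by
  intro ρ hg m hm
  apply hrig ρ hg m
  intro u v huv
  rcases Finset.mem_union.mp huv with h | h
  · exact hm u v (Finset.mem_union_left _ h)
  · obtain ⟨pl, hpl, heq⟩ := Finset.mem_image.mp h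
    obtain ⟨hplI, -⟩ := Finset.mem_filter.mp hpl
    obtain ⟨a, t, -, hq⟩ := line_trivial I pc₂ hpc₂ ρ m hg hm pl.2
    rcases Sym2.eq_iff.mp heq with ⟨hu, hv⟩ | ⟨hu, hv⟩
    · exact dot_of_trivial _ _ _ _ a t
        (hu ▸ hq (pc₁ pl.2) (hpc₁ pl.2)) (hv ▸ hq pl.1 hplI)
    · exact dot_of_trivial _ _ _ _ a t
        (hv ▸ hq pl.1 hplI) (hu ▸ hq (pc₁ pl.2) (hpc₁ pl.2))
end

section
/- Let G₁=(V₁,E₁) and G₂=(V₂,E₂) be graphs such that each edge set Eᵢ is independent with |Eᵢ| = 2|Vᵢ| − 3 (Vᵢ the support of Eᵢ), and suppose V₁ ∩ V₂ = {v} for a single vertex v. Let e=(v₁,v₂) be any edge with v₁ ∈ V₁ \ {v} and v₂ ∈ V₂ \ {v}, and set E₄ = E₁ ∪ E₂ ∪ {e}. Then the graph G₄=(V₄,E₄) generated by E₄ is minimally rigid in ℝ²: E₄ is independent and |E₄| = 2|V₄| − 3. -/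
/-- The support of an edge set: the set of all endpoints of its edges. -/
def edgeSupport {V : Type*} [DecidableEq V] (E : Finset (Sym2 V)) : Finset V :=
  E.sup (fun e => Sym2.lift ⟨fun a b => ({a, b} : Finset V), fun a b => Finset.pair_comm a b⟩ e)

/-- An edge set `E` is independent if every nonempty subset `E' ⊆ E` satisfies
`|E'| ≤ 2|V'| - 3`, where `V'` is the support of `E'`. -/
def EdgeIndep {V : Type*} [DecidableEq V] (E : Finset (Sym2 V)) : Prop :=
  ∀ E' ⊆ E, E'.Nonempty → (E'.card : ℤ) ≤ 2 * (edgeSupport E').card - 3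

section Aux
variable {V : Type*} [DecidableEq V]

lemma support_pair (a b : V) :
    Sym2.lift ⟨fun a b => ({a, b} : Finset V), fun a b => Finset.pair_comm a b⟩ s(a,b)
      = ({a, b} : Finset V) := rfl

lemma edgeSupport_insert (a b : V) (E : Finset (Sym2 V)) :
    edgeSupport (insert s(a,b) E) = insert a (insert b (edgeSupport E)) := by
  rw [edgeSupport, Finset.sup_insert]
  show ({a, b} : Finset V) ∪ _ = _
  rw [Finset.insert_union, ← Finset.insert_eq]
  rfl

lemma edgeSupport_union (A B : Finset (Sym2 V)) :
    edgeSupport (A ∪ B) = edgeSupport A ∪ edgeSupport B := Finset.sup_union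

lemma edgeSupport_mono {A B : Finset (Sym2 V)} (h : A ⊆ B) :
    edgeSupport A ⊆ edgeSupport B := Finset.le_iff_subset.mp (Finset.sup_mono h)

lemma mem_support_left {E : Finset (Sym2 V)} {a b : V} (h : s(a,b) ∈ E) :
    a ∈ edgeSupport E :=
  Finset.mem_sup.2 ⟨_, h, by rw [support_pair]; exact Finset.mem_insert_self _ _⟩

lemma mem_support_right {E : Finset (Sym2 V)} {a b : V} (h : s(a,b) ∈ E) :
    b ∈ edgeSupport E :=
  Finset.mem_sup.2 ⟨_, h, by rw [support_pair]; simp⟩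

lemma no_loop {E : Finset (Sym2 V)} (hind : EdgeIndep E) (a : V) : s(a,a) ∉ E := by
  intro h
  have := hind {s(a,a)} (by simpa using h) ⟨_, Finset.mem_singleton_self _⟩
  have hs : edgeSupport ({s(a,a)} : Finset (Sym2 V)) = {a} := by
    rw [edgeSupport, Finset.sup_singleton, support_pair]
    simp
  rw [hs] at this
  simp at this

end Aux

/-- If `G₁ = (V₁, E₁)` and `G₂ = (V₂, E₂)` are minimally rigid graphs
(each `Eᵢ` independent with `|Eᵢ| = 2|Vᵢ| - 3`) whose vertex sets intersect in the single
vertex `v`, and `e = (v₁, v₂)` is any edge with `v₁ ∈ V₁ \ {v}` and `v₂ ∈ V₂ \ {v}`, then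
the graph generated by `E₄ = E₁ ∪ E₂ ∪ {e}` is minimally rigid in `ℝ²`: `E₄` is independent
and `|E₄| = 2|V₄| - 3`. -/
theorem union_at_one_vertex_plus_edge_is_minimally_rigid {V : Type*} [DecidableEq V]
    (E₁ E₂ : Finset (Sym2 V))
    (hind₁ : EdgeIndep E₁) (hind₂ : EdgeIndep E₂)
    (hcard₁ : (E₁.card : ℤ) = 2 * (edgeSupport E₁).card - 3)
    (hcard₂ : (E₂.card : ℤ) = 2 * (edgeSupport E₂).card - 3)
    (v : V) (hv : edgeSupport E₁ ∩ edgeSupport E₂ = {v})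
    (v₁ v₂ : V) (hv₁ : v₁ ∈ edgeSupport E₁ \ {v}) (hv₂ : v₂ ∈ edgeSupport E₂ \ {v}) :
    EdgeIndep (insert s(v₁, v₂) (E₁ ∪ E₂)) ∧
      (((insert s(v₁, v₂) (E₁ ∪ E₂)).card : ℤ) =
        2 * (edgeSupport (insert s(v₁, v₂) (E₁ ∪ E₂))).card - 3) := by
  obtain ⟨hv₁V, hv₁v⟩ := Finset.mem_sdiff.1 hv₁
  obtain ⟨hv₂V, hv₂v⟩ := Finset.mem_sdiff.1 hv₂
  rw [Finset.mem_singleton] at hv₁v hv₂v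
  have hv2n1 : v₂ ∉ edgeSupport E₁ := fun h => hv₂v (by
    have := Finset.mem_inter.2 ⟨h, hv₂V⟩
    rw [hv] at this; exact Finset.mem_singleton.1 this)
  have hv1n2 : v₁ ∉ edgeSupport E₂ := fun h => hv₁v (by
    have := Finset.mem_inter.2 ⟨hv₁V, h⟩
    rw [hv] at this; exact Finset.mem_singleton.1 this)
  have hne12 : v₁ ≠ v₂ := fun h => hv2n1 (h ▸ hv₁V)
  have heE₁ : s(v₁,v₂) ∉ E₁ := fun h => hv2n1 (mem_support_right h)
  have heE₂ : s(v₁,v₂) ∉ E₂ := fun h => hv1n2 (mem_support_left h)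
  have hdisj : Disjoint E₁ E₂ := by
    rw [Finset.disjoint_left]
    intro x hx1 hx2
    induction x using Sym2.inductionOn with
    | hf a b =>
      have ha : a ∈ edgeSupport E₁ ∩ edgeSupport E₂ :=
        Finset.mem_inter.2 ⟨mem_support_left hx1, mem_support_left hx2⟩
      have hb : b ∈ edgeSupport E₁ ∩ edgeSupport E₂ :=
        Finset.mem_inter.2 ⟨mem_support_right hx1, mem_support_right hx2⟩
      rw [hv, Finset.mem_singleton] at ha hb
      rw [ha, hb] at hx1
      exact no_loop hind₁ v hx1
  have heU : s(v₁,v₂) ∉ E₁ ∪ E₂ := by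
    rw [Finset.mem_union]; rintro (h | h); exacts [heE₁ h, heE₂ h]
  have hcardU : (insert s(v₁,v₂) (E₁ ∪ E₂)).card = E₁.card + E₂.card + 1 := by
    rw [Finset.card_insert_of_notMem heU, Finset.card_union_of_disjoint hdisj]
  have hSU : edgeSupport (insert s(v₁,v₂) (E₁ ∪ E₂)) = edgeSupport E₁ ∪ edgeSupport E₂ := by
    rw [edgeSupport_insert, edgeSupport_union,
      Finset.insert_eq_self.2 (Finset.mem_union_right _ hv₂V),
      Finset.insert_eq_self.2 (Finset.mem_union_left _ hv₁V)]
  have hScard : (edgeSupport E₁ ∪ edgeSupport E₂).card + 1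
      = (edgeSupport E₁).card + (edgeSupport E₂).card := by
    have h := Finset.card_union_add_card_inter (edgeSupport E₁) (edgeSupport E₂)
    rw [hv, Finset.card_singleton] at h
    omega
  refine ⟨?_, ?_⟩
  · -- independence
    intro E' hsub hne
    set A := E' ∩ E₁ with hA_def
    set B := E' ∩ E₂ with hB_def
    have hAsub : A ⊆ E₁ := Finset.inter_subset_right
    have hBsub : B ⊆ E₂ := Finset.inter_subset_right
    have hSA : edgeSupport A ⊆ edgeSupport E₁ := edgeSupport_mono hAsub
    have hSB : edgeSupport B ⊆ edgeSupport E₂ := edgeSupport_mono hBsub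
    have hABdisj : Disjoint A B := hdisj.mono hAsub hBsub
    have hcardAB : (A ∪ B).card = A.card + B.card := Finset.card_union_of_disjoint hABdisj
    have hUcard : (edgeSupport A).card + (edgeSupport B).card
        ≤ (edgeSupport A ∪ edgeSupport B).card + 1 := by
      have h1 : edgeSupport A ∩ edgeSupport B ⊆ {v} := by
        rw [← hv]; exact Finset.inter_subset_inter hSA hSB
      have h2 := Finset.card_le_card h1
      have h3 := Finset.card_union_add_card_inter (edgeSupport A) (edgeSupport B)
      simp only [Finset.card_singleton] at h2
      omega
    by_cases he : s(v₁,v₂) ∈ E'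
    · have hE' : E' = insert s(v₁,v₂) (A ∪ B) := by
        apply Finset.Subset.antisymm
        · intro x hx
          rcases Finset.mem_insert.1 (hsub hx) with h | h
          · exact h ▸ Finset.mem_insert_self _ _
          · refine Finset.mem_insert_of_mem (Finset.mem_union.2 ?_)
            rcases Finset.mem_union.1 h with h1 | h1
            exacts [Or.inl (Finset.mem_inter.2 ⟨hx, h1⟩),
              Or.inr (Finset.mem_inter.2 ⟨hx, h1⟩)]
        · intro x hx
          rcases Finset.mem_insert.1 hx with h | h
          · exact h ▸ he
          · rcases Finset.mem_union.1 h with h1 | h1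
            exacts [(Finset.mem_inter.1 h1).1, (Finset.mem_inter.1 h1).1]
      have heAB : s(v₁,v₂) ∉ A ∪ B := by
        rw [Finset.mem_union]
        rintro (h | h)
        exacts [heE₁ (hAsub h), heE₂ (hBsub h)]
      have hcE' : E'.card = A.card + B.card + 1 := by
        rw [hE', Finset.card_insert_of_notMem heAB, hcardAB]
      have hSE' : edgeSupport E' = insert v₁ (insert v₂ (edgeSupport A ∪ edgeSupport B)) := by
        rw [hE', edgeSupport_insert, edgeSupport_union]
      rcases A.eq_empty_or_nonempty with hA | hA
      · rcases B.eq_empty_or_nonempty with hB | hB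
        · -- E' = {e}
          have hsupp : edgeSupport E' = {v₁, v₂} := by
            rw [hSE', hA, hB]
            simp [edgeSupport]
          have hc2 : (edgeSupport E').card = 2 := by
            rw [hsupp, Finset.card_insert_of_notMem (by simpa using hne12),
              Finset.card_singleton]
          have hc1 : E'.card = 1 := by
            rw [hcE', hA, hB]; simp
          rw [hc1, hc2]; norm_num
        · -- only B and e
          have hBc := hind₂ B hBsub hB
          have hSAe : edgeSupport A = ∅ := by rw [hA]; rfl
          have hv1nSB : v₁ ∉ insert v₂ (edgeSupport B) := by
            rw [Finset.mem_insert]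
            rintro (h | h)
            exacts [hne12 h, hv1n2 (hSB h)]
          have hcS : (edgeSupport E').card = (insert v₂ (edgeSupport B)).card + 1 := by
            rw [hSE', hSAe, Finset.empty_union, Finset.card_insert_of_notMem hv1nSB]
          have hle : (edgeSupport B).card ≤ (insert v₂ (edgeSupport B)).card :=
            Finset.card_le_card (Finset.subset_insert _ _)
          rw [hcE', hA, hcS]
          simp only [Finset.card_empty]
          push_cast
          omega
      · rcases B.eq_empty_or_nonempty with hB | hB
        · -- only A and e
          have hAc := hind₁ A hAsub hA
          have hSBe : edgeSupport B = ∅ := by rw [hB]; rfl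
          have hv2nSA : v₂ ∉ edgeSupport A := fun h => hv2n1 (hSA h)
          have hcS : (edgeSupport E').card = (insert v₂ (edgeSupport A)).card + ((edgeSupport E').card - (insert v₂ (edgeSupport A)).card) := by
            have hsub2 : insert v₂ (edgeSupport A) ⊆ edgeSupport E' := by
              rw [hSE', hSBe, Finset.union_empty]
              exact Finset.subset_insert _ _
            have := Finset.card_le_card hsub2
            omega
          have hins : (insert v₂ (edgeSupport A)).card = (edgeSupport A).card + 1 :=
            Finset.card_insert_of_notMem hv2nSA
          have hsub2 : insert v₂ (edgeSupport A) ⊆ edgeSupport E' := by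
            rw [hSE', hSBe, Finset.union_empty]
            exact Finset.subset_insert _ _
          have hle2 := Finset.card_le_card hsub2
          rw [hcE', hB]
          simp only [Finset.card_empty]
          push_cast
          omega
        · -- both nonempty, with e
          have hAc := hind₁ A hAsub hA
          have hBc := hind₂ B hBsub hB
          have hle : (edgeSupport A ∪ edgeSupport B).card ≤ (edgeSupport E').card := by
            rw [hSE']
            exact Finset.card_le_card ((Finset.subset_insert _ _).trans (Finset.subset_insert _ _))
          rw [hcE']
          push_cast
          omega
    · -- e ∉ E'
      have hE' : E' = A ∪ B := by
        apply Finset.Subset.antisymm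
        · intro x hx
          rcases Finset.mem_insert.1 (hsub hx) with h | h
          · exact absurd (h ▸ hx) he
          · refine Finset.mem_union.2 ?_
            rcases Finset.mem_union.1 h with h1 | h1
            exacts [Or.inl (Finset.mem_inter.2 ⟨hx, h1⟩),
              Or.inr (Finset.mem_inter.2 ⟨hx, h1⟩)]
        · intro x hx
          rcases Finset.mem_union.1 hx with h1 | h1
          exacts [(Finset.mem_inter.1 h1).1, (Finset.mem_inter.1 h1).1]
      rcases A.eq_empty_or_nonempty with hA | hA
      · have hEB : E' = B := by rw [hE', hA, Finset.empty_union]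
        exact hEB ▸ hind₂ B hBsub (hEB ▸ hne)
      · rcases B.eq_empty_or_nonempty with hB | hB
        · have hEA : E' = A := by rw [hE', hB, Finset.union_empty]
          exact hEA ▸ hind₁ A hAsub (hEA ▸ hne)
        · have hAc := hind₁ A hAsub hA
          have hBc := hind₂ B hBsub hB
          rw [hE', hcardAB, edgeSupport_union]
          push_cast
          omega
  · -- cardinality
    rw [hcardU, hSU]
    push_cast
    omega
end

section
/- Let S=(P,L,I) be a connected rank-two incidence geometry in which every line is incident to at least two points. If some cone graph of S is flexible (not rigid) in ℝ², then the cone incidence geometry S^C has no realization as an infinitesimally rigid regular proper string configuration in ℝ². -/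
/-- The lines of the cone incidence geometry `S^C` of `S = (P, L, I)`: for each line
`ℓ ∈ L` the set of points of `ℓ`, and for each incidence `(p, ℓ) ∈ I` the two-point line
consisting of the cone point `c_ℓ = Sum.inr ℓ` and `p`. -/
def coneLines {P L : Type*} [Fintype P] [Fintype L] [DecidableEq P] [DecidableEq L]
    (I : Finset (P × L)) : Finset (Finset (P ⊕ L)) :=
  Finset.univ.image
      (fun ℓ : L => (I.filter (fun pl => pl.2 = ℓ)).image (fun pl => (Sum.inl pl.1 : P ⊕ L))) ∪
    I.image (fun pl => ({Sum.inr pl.2, Sum.inl pl.1} : Finset (P ⊕ L)))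

/-- Sharp independence of a set of incidences: every nonempty subset `J` whose support
`Q × M` has `|Q| ≥ 2` satisfies `|J| ≤ |M| + 2|Q| - 3`. -/
def SharplyIndep {Pt Ln : Type*} [DecidableEq Pt] [DecidableEq Ln]
    (I' : Finset (Pt × Ln)) : Prop :=
  ∀ J ⊆ I', J.Nonempty → 2 ≤ (J.image Prod.fst).card →
    (J.card : ℤ) ≤ (J.image Prod.snd).card + 2 * (J.image Prod.fst).card - 3

/-- The concurrence geometry matrix of a linear realization with line slopes `f`:
rows are indexed by incidences, columns by the intercept variables (one for each line,
`Sum.inl`) and the coordinate variables (two for each point: `Sum.inr (p, false)` is the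
`x`-column and `Sum.inr (p, true)` the `y`-column of `p`). -/
def concMatrix {Pt Ln : Type*} [DecidableEq Pt] [DecidableEq Ln]
    (I : Finset (Pt × Ln)) (f : Ln → ℝ) :
    Matrix {e // e ∈ I} (Ln ⊕ Pt × Bool) ℝ :=
  fun e c =>
    match c with
    | Sum.inl ℓ => if e.1.2 = ℓ then 1 else 0
    | Sum.inr (p, false) => if e.1.1 = p then f e.1.2 else 0
    | Sum.inr (p, true) => if e.1.1 = p then 1 else 0

/-- A linear realization with line slopes `f` of the incidence geometry with incidences `I`
is regular if the rows of the concurrence geometry matrix indexed by any sharply independent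
subset of `I` are linearly independent. -/
def RegularSlopes {Pt Ln : Type*} [DecidableEq Pt] [DecidableEq Ln]
    (I : Finset (Pt × Ln)) (f : Ln → ℝ) : Prop :=
  ∀ (I' : Finset (Pt × Ln)) (hsub : I' ⊆ I), SharplyIndep I' →
    LinearIndependent ℝ (fun j : {e // e ∈ I'} => concMatrix I f ⟨j.1, hsub j.2⟩)

/-- The graph on the vertex subset `s` with edges taken from `T`. -/
def graphOn {Pt : Type*} [DecidableEq Pt] (T : Finset (Sym2 Pt)) (s : Finset Pt) :
    SimpleGraph {x // x ∈ s} where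
  Adj u v := u ≠ v ∧ s(u.1, v.1) ∈ T
  symm := by
    constructor
    rintro u v ⟨h1, h2⟩
    exact ⟨h1.symm, by rwa [Sym2.eq_swap]⟩
  loopless := ⟨fun u h => h.1 rfl⟩

/-- `T` is the edge set of a spanning tree on the vertex set `s`. -/
def IsSpanningTreeOn {Pt : Type*} [DecidableEq Pt] (s : Finset Pt) (T : Finset (Sym2 Pt)) :
    Prop :=
  (∀ e ∈ T, ∀ v ∈ e, v ∈ s) ∧ (graphOn T s).IsTree

/-- `edges` is the edge set of a string configuration realizing the incidence geometry whose
lines are the members of `Lines`: a union over the lines of a spanning tree on the points of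
each line. -/
def StringEdges {Pt : Type*} [DecidableEq Pt] (Lines : Finset (Finset Pt))
    (edges : Finset (Sym2 Pt)) : Prop :=
  ∃ t : Finset Pt → Finset (Sym2 Pt),
    edges = Lines.sup t ∧ ∀ s ∈ Lines, IsSpanningTreeOn s (t s)

/-- The positions `pos` together with line slopes `f` and intercepts `h` form a linear
realization of the incidence geometry whose lines are the members of `Lines` (with
incidences given by membership): `f_i x_j + y_j + h_i = 0` for all incidences. -/
def IsLinearRealization {Pt : Type*} (Lines : Finset (Finset Pt)) (pos : Pt → ℝ × ℝ)
    (f h : Finset Pt → ℝ) : Prop :=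
  ∀ s ∈ Lines, ∀ p ∈ s, f s * (pos p).1 + (pos p).2 + h s = 0

/-- The incidences (given by membership) of the incidence geometry with point set `Pt` whose
lines are the members of `Lines`. -/
def memIncidences {Pt : Type*} [DecidableEq Pt] [Fintype Pt] (Lines : Finset (Finset Pt)) :
    Finset (Pt × Finset Pt) :=
  (Finset.univ ×ˢ Lines).filter (fun vs => vs.1 ∈ vs.2)

/-- `(edges, pos)` is a regular proper string configuration realizing the incidence geometry
whose lines are the members of `Lines`: the graph is a union of spanning trees of the lines,
the positions are injective (proper), and the underlying linear realization exists and is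
regular. -/
def IsRegularProperStringConfig {Pt : Type*} [DecidableEq Pt] [Fintype Pt]
    (Lines : Finset (Finset Pt)) (edges : Finset (Sym2 Pt)) (pos : Pt → ℝ × ℝ) : Prop :=
  StringEdges Lines edges ∧ Function.Injective pos ∧
    ∃ f h : Finset Pt → ℝ, IsLinearRealization Lines pos f h ∧
      RegularSlopes (memIncidences Lines) f


set_option linter.unusedSectionVars false
set_option maxHeartbeats 1000000

open Matrix Module MvPolynomial

section RankLemmas

variable {ι κ : Type*} [Fintype ι] [Fintype κ] [DecidableEq ι] [DecidableEq κ]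

lemma rank_ge_of_minor_aux (M : Matrix ι κ ℝ) {r : ℕ} (f : Fin r → ι) (g : Fin r → κ)
    (hdet : (M.submatrix f g).det ≠ 0) : r ≤ M.rank := by
  classical
  set Rsel : Matrix (Fin r) ι ℝ := fun i j => if j = f i then 1 else 0 with hR
  set Csel : Matrix κ (Fin r) ℝ := fun j i => if j = g i then 1 else 0 with hC
  have hprod : Rsel * (M * Csel) = M.submatrix f g := by
    ext i j
    simp only [Matrix.mul_apply, Matrix.submatrix_apply]
    simp only [hR, hC]
    rw [Finset.sum_eq_single (f i)]
    · simp only [if_pos rfl, one_mul]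
      rw [Finset.sum_eq_single (g j)]
      · simp
      · intro b _ hb; simp [hb]
      · simp
    · intro b _ hb; simp [hb]
    · simp
  have h1 : (M.submatrix f g).rank ≤ (M * Csel).rank := by
    rw [← hprod]; exact Matrix.rank_mul_le_right _ _
  have h2 : (M * Csel).rank ≤ M.rank := Matrix.rank_mul_le_left _ _
  have h3 : (M.submatrix f g).rank = r := by
    have hu : IsUnit (M.submatrix f g) :=
      (Matrix.isUnit_iff_isUnit_det _).2 (isUnit_iff_ne_zero.2 hdet)
    rw [Matrix.rank_of_isUnit _ hu, Fintype.card_fin]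
  omega

lemma exists_indep_subfamily_aux {ι' : Type*} [Fintype ι'] (w : κ → (ι' → ℝ)) (r : ℕ)
    (hr : r ≤ finrank ℝ (Submodule.span ℝ (Set.range w))) :
    ∃ g : Fin r → κ, LinearIndependent ℝ (w ∘ g) := by
  classical
  obtain ⟨b, hbsub, hbspan, hbli⟩ := exists_linearIndependent ℝ (Set.range w)
  have hbfin : b.Finite := (Set.finite_range w).subset hbsub
  haveI : Fintype b := hbfin.fintype
  have hcard : finrank ℝ (Submodule.span ℝ b) = b.toFinset.card :=
    finrank_span_set_eq_card hbli
  have hrb : r ≤ Fintype.card b := by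
    rw [Set.toFinset_card] at hcard
    rw [hbspan] at hcard
    omega
  obtain ⟨e⟩ : Nonempty (Fin r ↪ b) := by
    apply Function.Embedding.nonempty_of_card_le
    simpa using hrb
  choose pre hpre using fun x : b => hbsub x.2
  refine ⟨fun i => pre (e i), ?_⟩
  have : w ∘ (fun i => pre (e i)) = fun i => ((e i : b) : ι' → ℝ) := by
    funext i; simp [Function.comp, hpre (e i)]
  rw [this]
  exact hbli.comp e e.injective

lemma exists_minor_of_le_rank_aux (M : Matrix ι κ ℝ) {r : ℕ} (hr : r ≤ M.rank) :
    ∃ (f : Fin r → ι) (g : Fin r → κ), (M.submatrix f g).det ≠ 0 := by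
  classical
  have hcols : r ≤ finrank ℝ (Submodule.span ℝ (Set.range Mᵀ)) := by
    rw [Matrix.rank_eq_finrank_span_cols] at hr; exact hr
  obtain ⟨g, hg⟩ := exists_indep_subfamily_aux Mᵀ r hcols
  set N : Matrix ι (Fin r) ℝ := M.submatrix id g with hN
  have hNt : Nᵀ = Mᵀ ∘ g := by funext j i; rfl
  have hrankN : N.rank = r := by
    have : Nᵀ.rank = r := by
      have := LinearIndependent.rank_matrix (M := Nᵀ) (by rw [hNt]; exact hg)
      simpa using this
    rw [← Matrix.rank_transpose]; exact this
  have hrows : r ≤ finrank ℝ (Submodule.span ℝ (Set.range N)) := by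
    have h := Matrix.rank_eq_finrank_span_row N; rw [hrankN] at h; exact h.le
  obtain ⟨f, hf⟩ := exists_indep_subfamily_aux N r hrows
  refine ⟨f, g, ?_⟩
  have hsq : (M.submatrix f g) = N.submatrix f id := by funext i j; rfl
  have : LinearIndependent ℝ (fun i => (N.submatrix f id) i) := by
    have : (fun i => (N.submatrix f id) i) = N ∘ f := by funext i; rfl
    rw [this]; exact hf
  have hu : IsUnit (N.submatrix f id) := Matrix.linearIndependent_rows_iff_isUnit.1 this
  rw [hsq]
  have := (Matrix.isUnit_iff_isUnit_det _).1 hu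
  exact this.ne_zero
end RankLemmas

section GenericRankAux
variable {ι κ σ : Type*} [Fintype ι] [Fintype κ] [DecidableEq ι] [DecidableEq κ]

lemma rank_map_le_of_algIndep_aux (A : Matrix ι κ (MvPolynomial σ ℚ)) (x y : σ → ℝ)
    (hx : AlgebraicIndependent ℚ x) :
    (A.map (MvPolynomial.aeval y)).rank ≤ (A.map (MvPolynomial.aeval x)).rank := by
  obtain ⟨f, g, hdet⟩ := exists_minor_of_le_rank_aux (A.map (MvPolynomial.aeval y)) (le_refl _)
  apply rank_ge_of_minor_aux _ f g
  have key : ∀ z : σ → ℝ, ((A.map (MvPolynomial.aeval z)).submatrix f g).det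
      = MvPolynomial.aeval z ((A.submatrix f g).det) := by
    intro z
    rw [Matrix.submatrix_map, ← AlgHom.mapMatrix_apply, ← AlgHom.map_det]
  rw [key] at hdet ⊢
  have hp : (A.submatrix f g).det ≠ 0 := fun h => hdet (by simp [h])
  intro h
  exact hp (hx (by simpa using h))

end GenericRankAux

namespace RigAux
variable {V : Type*} [Fintype V] [DecidableEq V]

/-- coordinates of a framework as a function on `V × Bool`. -/
def coordsOf (ρ : V → ℝ × ℝ) : V × Bool → ℝ := fun p => if p.2 then (ρ p.1).1 else (ρ p.1).2

lemma generic_iff (ρ : V → ℝ × ℝ) : Generic ρ ↔ AlgebraicIndependent ℚ (coordsOf ρ) := Iff.rfl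

/-- the edge energy form. -/
def eform (ρ m : V → ℝ × ℝ) : Sym2 V → ℝ :=
  Sym2.lift ⟨fun u w => dot (ρ u - ρ w) (m u - m w), by
    intro a b; simp only [dot, Prod.fst_sub, Prod.snd_sub]; ring⟩

@[simp] lemma eform_mk (ρ m : V → ℝ × ℝ) (u w : V) :
    eform ρ m s(u, w) = dot (ρ u - ρ w) (m u - m w) := rfl

/-- polynomial row of the rigidity matrix. -/
noncomputable def rowPoly : Sym2 V → (V × Bool) → MvPolynomial (V × Bool) ℚ :=
  Sym2.lift ⟨fun u w => fun c =>
    ((if c.1 = u then (1 : MvPolynomial (V × Bool) ℚ) else 0) -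
      (if c.1 = w then 1 else 0)) * (X (u, c.2) - X (w, c.2)), by
    intro a b; funext c; ring⟩

@[simp] lemma rowPoly_mk (u w : V) (c : V × Bool) :
    rowPoly s(u, w) c =
      ((if c.1 = u then (1 : MvPolynomial (V × Bool) ℚ) else 0) -
        (if c.1 = w then 1 else 0)) * (X (u, c.2) - X (w, c.2)) := rfl

variable (E : Finset (Sym2 V))

noncomputable def rigMatPoly : Matrix {e // e ∈ E} (V × Bool) (MvPolynomial (V × Bool) ℚ) :=
  fun e c => rowPoly e.1 c

noncomputable def rigMat (ρ : V → ℝ × ℝ) : Matrix {e // e ∈ E} (V × Bool) ℝ :=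
  (rigMatPoly E).map (MvPolynomial.aeval (coordsOf ρ))

/-- coordinate linear map. -/
def coordL : (V → ℝ × ℝ) →ₗ[ℝ] ((V × Bool) → ℝ) where
  toFun := coordsOf
  map_add' m m' := by funext c; cases c with | mk v b => cases b <;> simp [coordsOf]
  map_smul' r m := by funext c; cases c with | mk v b => cases b <;> simp [coordsOf]

lemma coordL_surj : Function.Surjective (coordL (V := V)) := by
  intro g
  refine ⟨fun v => (g (v, true), g (v, false)), ?_⟩
  funext c; cases c with | mk v b => cases b <;> simp [coordL, coordsOf]

lemma eval_row (ρ m : V → ℝ × ℝ) (e : Sym2 V) :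
    ∑ c : V × Bool, (MvPolynomial.aeval (coordsOf ρ) (rowPoly e c)) * (coordsOf m c)
      = eform ρ m e := by
  induction e using Sym2.ind with
  | _ u w =>
    rw [Fintype.sum_prod_type]
    simp only [rowPoly_mk, ite_mul, one_mul, zero_mul, sub_mul]
    simp only [map_sub, apply_ite (MvPolynomial.aeval (coordsOf ρ)), map_zero, aeval_X]
    simp only [Fintype.sum_bool]
    simp only [coordsOf, eform_mk, dot]
    simp only [Bool.false_eq_true, if_true, if_false]
    simp only [sub_mul, ite_mul, zero_mul, Finset.sum_add_distrib, Finset.sum_sub_distrib,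
      Finset.sum_ite_eq', Finset.mem_univ, if_true]
    simp only [Prod.fst_sub, Prod.snd_sub]
    ring

noncomputable def rigMap (ρ : V → ℝ × ℝ) : (V → ℝ × ℝ) →ₗ[ℝ] ({e // e ∈ E} → ℝ) :=
  (rigMat E ρ).mulVecLin ∘ₗ coordL

lemma rigMap_apply (ρ m : V → ℝ × ℝ) (e : {e // e ∈ E}) :
    rigMap E ρ m e = eform ρ m e.1 := by
  rw [← eval_row]
  rfl

lemma mem_ker_rigMap (ρ m : V → ℝ × ℝ) :
    m ∈ LinearMap.ker (rigMap E ρ) ↔ IsInfMotion E ρ m := by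
  rw [LinearMap.mem_ker]
  constructor
  · intro h u v huv
    have := congrFun h ⟨s(u, v), huv⟩
    rw [rigMap_apply] at this
    simpa using this
  · intro hm
    funext e
    obtain ⟨e, he⟩ := e
    rw [rigMap_apply]
    induction e using Sym2.ind with
    | _ u w => exact hm u w he

/-- the linear map whose range is the trivial motions. -/
def trivL (ρ : V → ℝ × ℝ) : (ℝ × (ℝ × ℝ)) →ₗ[ℝ] (V → ℝ × ℝ) where
  toFun p := fun v => p.1 • perp (ρ v) + p.2
  map_add' p q := by
    funext v
    simp only [Prod.fst_add, Prod.snd_add, add_smul, Pi.add_apply]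
    abel
  map_smul' r p := by
    funext v
    simp only [Prod.smul_fst, Prod.smul_snd, smul_eq_mul, RingHom.id_apply, Pi.smul_apply,
      smul_add, smul_smul]

lemma mem_range_trivL (ρ m : V → ℝ × ℝ) :
    m ∈ LinearMap.range (trivL ρ) ↔ IsTrivialMotion ρ m := by
  constructor
  · rintro ⟨⟨a, t⟩, rfl⟩; exact ⟨a, t, fun v => rfl⟩
  · rintro ⟨a, t, h⟩; exact ⟨⟨a, t⟩, by funext v; exact (h v).symm⟩

lemma trivial_isInfMotion (ρ : V → ℝ × ℝ) (a : ℝ) (t : ℝ × ℝ) :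
    IsInfMotion E ρ (fun v => a • perp (ρ v) + t) := by
  intro u v _
  simp only [dot, perp, Prod.smul_mk, smul_eq_mul, Prod.fst_sub, Prod.snd_sub,
    Prod.fst_add, Prod.snd_add]
  ring

lemma generic_fst_ne {ρ : V → ℝ × ℝ} (hg : Generic ρ) {u v : V} (huv : u ≠ v) :
    (ρ u).1 ≠ (ρ v).1 := by
  have hinj : Function.Injective (MvPolynomial.aeval (coordsOf ρ) :
      MvPolynomial (V × Bool) ℚ →ₐ[ℚ] ℝ) :=
    algebraicIndependent_iff_injective_aeval.1 ((generic_iff ρ).1 hg)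
  intro heq
  set q : MvPolynomial (V × Bool) ℚ := X (u, true) - X (v, true) with hqdef
  have hq : q ≠ 0 := by
    intro h0
    have := congrArg (MvPolynomial.eval (fun c => if c = ((u : V), true) then (1 : ℚ) else 0)) h0
    simp [hqdef, MvPolynomial.eval_X, Prod.ext_iff, huv.symm] at this
  apply hq
  apply hinj
  simp [hqdef, coordsOf, heq]

lemma generic_cross_ne {ρ : V → ℝ × ℝ} (hg : Generic ρ) {u v w : V}
    (huv : u ≠ v) (huw : u ≠ w) (hvw : v ≠ w) :
    (ρ u - ρ w).1 * (ρ v - ρ w).2 - (ρ u - ρ w).2 * (ρ v - ρ w).1 ≠ 0 := by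
  have hinj : Function.Injective (MvPolynomial.aeval (coordsOf ρ) :
      MvPolynomial (V × Bool) ℚ →ₐ[ℚ] ℝ) :=
    algebraicIndependent_iff_injective_aeval.1 ((generic_iff ρ).1 hg)
  intro heq
  set q : MvPolynomial (V × Bool) ℚ :=
    (X (u, true) - X (w, true)) * (X (v, false) - X (w, false)) -
      (X (u, false) - X (w, false)) * (X (v, true) - X (w, true)) with hqdef
  have hq : q ≠ 0 := by
    intro h0
    have := congrArg (MvPolynomial.eval
      (fun c => if c = ((u : V), true) then (1 : ℚ) else if c = ((v : V), false) then 1 else 0)) h0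
    simp [hqdef, MvPolynomial.eval_X, Prod.ext_iff, huv, huw, hvw, huv.symm, huw.symm,
      hvw.symm] at this
  apply hq
  apply hinj
  have : (MvPolynomial.aeval (coordsOf ρ)) q =
      (ρ u - ρ w).1 * (ρ v - ρ w).2 - (ρ u - ρ w).2 * (ρ v - ρ w).1 := by
    simp [hqdef, coordsOf, Prod.fst_sub, Prod.snd_sub]
  rw [this, heq, map_zero]

lemma finrank_range_rigMap (ρ : V → ℝ × ℝ) :
    finrank ℝ (LinearMap.range (rigMap E ρ)) = (rigMat E ρ).rank := by
  rw [rigMap, LinearMap.range_comp_of_range_eq_top _ (LinearMap.range_eq_top.2 coordL_surj)]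
  rfl

/-- transfer of infinitesimal rigidity from an arbitrary framework to a generic one. -/
theorem infRigid_of_generic {E : Finset (Sym2 V)} {pos ρ : V → ℝ × ℝ}
    (hrig : InfRigid E pos) (hgen : Generic ρ) (hV : ∃ u v : V, u ≠ v) :
    InfRigid E ρ := by
  classical
  have hfr3 : finrank ℝ (ℝ × (ℝ × ℝ)) = 3 := by
    simp [Module.finrank_prod]
  -- kernel at pos is small
  have hker1 : LinearMap.ker (rigMap E pos) ≤ LinearMap.range (trivL pos) := by
    intro m' hm'
    exact (mem_range_trivL pos m').2 (hrig m' ((mem_ker_rigMap E pos m').1 hm'))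
  have hk1 : finrank ℝ (LinearMap.ker (rigMap E pos)) ≤ 3 := by
    calc finrank ℝ (LinearMap.ker (rigMap E pos))
        ≤ finrank ℝ (LinearMap.range (trivL pos)) := Submodule.finrank_mono hker1
      _ ≤ finrank ℝ (ℝ × (ℝ × ℝ)) := LinearMap.finrank_range_le _
      _ = 3 := hfr3
  -- rank comparison via genericity
  have hrk : (rigMat E pos).rank ≤ (rigMat E ρ).rank :=
    rank_map_le_of_algIndep_aux (rigMatPoly E) (coordsOf ρ) (coordsOf pos) ((generic_iff ρ).1 hgen)
  have hrn1 := LinearMap.finrank_range_add_finrank_ker (rigMap E pos)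
  have hrn2 := LinearMap.finrank_range_add_finrank_ker (rigMap E ρ)
  rw [finrank_range_rigMap] at hrn1 hrn2
  have hk2 : finrank ℝ (LinearMap.ker (rigMap E ρ)) ≤ 3 := by omega
  -- trivial motions at ρ form a 3-dimensional space inside the kernel
  obtain ⟨u, v, huv⟩ := hV
  have hinj : Function.Injective (trivL ρ) := by
    rw [← LinearMap.ker_eq_bot]
    rw [Submodule.eq_bot_iff]
    rintro ⟨a, t⟩ hp
    have h0 : ∀ w : V, a • perp (ρ w) + t = 0 := fun w => congrFun hp w
    have hu := h0 u
    have hv := h0 v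
    rw [Prod.ext_iff] at hu hv
    simp only [perp, Prod.smul_mk, smul_eq_mul, Prod.fst_add, Prod.snd_add, Prod.fst_zero,
      Prod.snd_zero] at hu hv
    have ha : a = 0 := by
      have h1 := hu.2
      have h2 := hv.2
      have := generic_fst_ne hgen huv
      have : a * ((ρ u).1 - (ρ v).1) = 0 := by linarith [h1, h2]
      rcases mul_eq_zero.1 this with h | h
      · exact h
      · exact absurd (by linarith : (ρ u).1 = (ρ v).1) (generic_fst_ne hgen huv)
    subst ha
    simp only [zero_mul, zero_add] at hu
    have : t = 0 := Prod.ext hu.1 hu.2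
    simp [this]
  have htri : finrank ℝ (LinearMap.range (trivL ρ)) = 3 := by
    rw [LinearMap.finrank_range_of_inj hinj, hfr3]
  have hle : LinearMap.range (trivL ρ) ≤ LinearMap.ker (rigMap E ρ) := by
    rintro m' ⟨⟨a, t⟩, rfl⟩
    exact (mem_ker_rigMap E ρ _).2 (trivial_isInfMotion E ρ a t)
  have heq : LinearMap.range (trivL ρ) = LinearMap.ker (rigMap E ρ) :=
    Submodule.eq_of_le_of_finrank_le hle (by omega)
  intro m hm
  have : m ∈ LinearMap.ker (rigMap E ρ) := (mem_ker_rigMap E ρ m).2 hm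
  rw [← heq] at this
  exact (mem_range_trivL ρ m).1 this

lemma exists_perp_coeff {x y : ℝ × ℝ} (hx : x ≠ 0) (h : dot x y = 0) :
    ∃ a : ℝ, y = a • perp x := by
  have hx2 : x.1 ^ 2 + x.2 ^ 2 ≠ 0 := by
    intro h0
    apply hx
    have h1 : x.1 = 0 := by nlinarith [sq_nonneg x.1, sq_nonneg x.2]
    have h2 : x.2 = 0 := by nlinarith [sq_nonneg x.1, sq_nonneg x.2]
    exact Prod.ext h1 h2
  refine ⟨(x.1 * y.2 - x.2 * y.1) / (x.1 ^ 2 + x.2 ^ 2), ?_⟩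
  simp only [dot] at h
  apply Prod.ext
  · simp only [perp, Prod.smul_mk, smul_eq_mul]
    field_simp
    linear_combination x.1 * h
  · simp only [perp, Prod.smul_mk, smul_eq_mul]
    field_simp
    linear_combination x.2 * h

lemma eq_zero_of_two_dots {x x' z : ℝ × ℝ} (hcross : x.1 * x'.2 - x.2 * x'.1 ≠ 0)
    (h1 : dot x z = 0) (h2 : dot x' z = 0) : z = 0 := by
  simp only [dot] at h1 h2
  have hz1 : z.1 * (x.1 * x'.2 - x.2 * x'.1) = 0 := by linear_combination x'.2 * h1 - x.2 * h2
  have hz2 : z.2 * (x.1 * x'.2 - x.2 * x'.1) = 0 := by linear_combination (-x'.1) * h1 + x.1 * h2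
  have hz1' : z.1 = 0 := by
    rcases mul_eq_zero.1 hz1 with h | h
    · exact h
    · exact absurd h hcross
  have hz2' : z.2 = 0 := by
    rcases mul_eq_zero.1 hz2 with h | h
    · exact h
    · exact absurd h hcross
  exact Prod.ext hz1' hz2'

lemma dot_perp (x : ℝ × ℝ) (a : ℝ) : dot x (a • perp x) = 0 := by
  simp only [dot, perp, Prod.smul_mk, smul_eq_mul]
  ring

lemma perp_neg (x : ℝ × ℝ) : perp (-x) = - perp x := by
  simp only [perp, Prod.fst_neg, Prod.snd_neg, Prod.neg_mk, neg_neg]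

lemma perp_add (x y : ℝ × ℝ) : perp (x + y) = perp x + perp y := by
  simp only [perp, Prod.fst_add, Prod.snd_add, Prod.mk_add_mk, neg_add]

lemma perp_sub (x y : ℝ × ℝ) : perp (x - y) = perp x - perp y := by
  simp only [perp, Prod.fst_sub, Prod.snd_sub, Prod.mk_sub_mk, neg_sub]
  exact congrArg (fun r => (r, x.1 - y.1)) (by ring)

lemma dot_neg_both (x y : ℝ × ℝ) : dot (-x) (-y) = dot x y := by
  simp only [dot, Prod.fst_neg, Prod.snd_neg]; ring

lemma dot_sub_right (x y z : ℝ × ℝ) : dot x (y - z) = dot x y - dot x z := by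
  simp [dot, Prod.fst_sub, Prod.snd_sub]; ring

lemma dot_add_right (x y z : ℝ × ℝ) : dot x (y + z) = dot x y + dot x z := by
  simp [dot, Prod.fst_add, Prod.snd_add]; ring


end RigAux

section Cone
variable {P L : Type*} [Fintype P] [Fintype L] [DecidableEq P] [DecidableEq L]

lemma cone_motion_extends (I : Finset (P × L)) (pc : L → P) (hpc : ∀ ℓ, (pc ℓ, ℓ) ∈ I)
    (ρ m : P ⊕ L → ℝ × ℝ) (hgen : Generic ρ)
    (hm : IsInfMotion (coneEdges I pc) ρ m)
    (t : Finset (P ⊕ L) → Finset (Sym2 (P ⊕ L)))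
    (ht : ∀ s ∈ coneLines I, IsSpanningTreeOn s (t s)) :
    IsInfMotion ((coneLines I).sup t) ρ m := by
  intro u v huv
  by_cases hueq : u = v
  · simp [hueq, dot]
  rw [Finset.mem_sup] at huv
  obtain ⟨s, hs, hes⟩ := huv
  have hsub := (ht s hs).1
  have hu : u ∈ s := hsub _ hes u (Sym2.mem_mk_left u v)
  have hv : v ∈ s := hsub _ hes v (Sym2.mem_mk_right u v)
  rw [coneLines, Finset.mem_union] at hs
  rcases hs with hs | hs
  · -- point-set line of some ℓ
    rw [Finset.mem_image] at hs
    obtain ⟨ℓ, -, rfl⟩ := hs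
    rw [Finset.mem_image] at hu hv
    obtain ⟨⟨p, ℓp⟩, hpmem, hup⟩ := hu
    obtain ⟨hpI0, hpl⟩ := Finset.mem_filter.1 hpmem
    simp only at hpl
    have hpI : (p, ℓ) ∈ I := by rw [← hpl]; exact hpI0
    obtain ⟨⟨q, ℓq⟩, hqmem, hvq⟩ := hv
    obtain ⟨hqI0, hql⟩ := Finset.mem_filter.1 hqmem
    simp only at hql
    have hqI : (q, ℓ) ∈ I := by rw [← hql]; exact hqI0
    -- set up cone vertex and inner vertex
    set c : P ⊕ L := Sum.inr ℓ with hc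
    set w : P ⊕ L := Sum.inl (pc ℓ) with hw
    have hcw : ρ c ≠ ρ w := by
      intro h
      exact RigAux.generic_fst_ne hgen (by simp [hc, hw] : c ≠ w) (congrArg Prod.fst h)
    have hcwE : s(c, w) ∈ coneEdges I pc := by
      apply Finset.mem_union_left
      exact Finset.mem_image.2 ⟨(pc ℓ, ℓ), hpc ℓ, rfl⟩
    obtain ⟨a, ha⟩ := RigAux.exists_perp_coeff (sub_ne_zero.2 hcw) (hm c w hcwE)
    have key : ∀ p', (p', ℓ) ∈ I →
        m (Sum.inl p') - m c = a • perp (ρ (Sum.inl p') - ρ c) := by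
      intro p' hp'
      by_cases hppc : p' = pc ℓ
      · subst hppc
        calc m (Sum.inl (pc ℓ)) - m c = -(m c - m w) := by rw [hw]; abel
          _ = -(a • perp (ρ c - ρ w)) := by rw [ha]
          _ = a • perp (ρ (Sum.inl (pc ℓ)) - ρ c) := by
              rw [← smul_neg, ← RigAux.perp_neg, neg_sub, hw]
      · have he1 : s(c, Sum.inl p') ∈ coneEdges I pc := by
          apply Finset.mem_union_left
          exact Finset.mem_image.2 ⟨(p', ℓ), hp', rfl⟩
        have he2 : s(w, Sum.inl p') ∈ coneEdges I pc := by
          apply Finset.mem_union_right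
          refine Finset.mem_image.2 ⟨(p', ℓ), ?_, rfl⟩
          exact Finset.mem_filter.2 ⟨hp', hppc⟩
        have hd1 := hm c (Sum.inl p') he1
        have hd2 := hm w (Sum.inl p') he2
        set x := ρ (Sum.inl p') - ρ c with hx
        set x' := ρ (Sum.inl p') - ρ w with hx'
        set z := m (Sum.inl p') - m c - a • perp x with hz
        have hd1' : dot x (m (Sum.inl p') - m c) = 0 := by
          rw [← RigAux.dot_neg_both] at hd1
          simpa [hx, neg_sub] using hd1
        have hd2' : dot x' (m (Sum.inl p') - m w) = 0 := by
          rw [← RigAux.dot_neg_both] at hd2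
          simpa [hx', neg_sub] using hd2
        have hdx : dot x z = 0 := by
          rw [hz, RigAux.dot_sub_right, hd1', RigAux.dot_perp]
          ring
        have hdx' : dot x' z = 0 := by
          have hmp : m (Sum.inl p') - m w = z + a • perp x' := by
            have hsplit : x' = x + (ρ c - ρ w) := by rw [hx, hx']; abel
            calc m (Sum.inl p') - m w = (m (Sum.inl p') - m c) + (m c - m w) := by abel
              _ = (m (Sum.inl p') - m c) + a • perp (ρ c - ρ w) := by rw [ha]
              _ = z + a • perp x' := by
                  rw [hz, hsplit, RigAux.perp_add, smul_add]; abel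
          rw [hmp, RigAux.dot_add_right, RigAux.dot_perp] at hd2'
          linarith
        have hcross : x.1 * x'.2 - x.2 * x'.1 ≠ 0 := by
          have hne1 : c ≠ w := by simp [hc, hw]
          have hne2 : c ≠ Sum.inl p' := by simp [hc]
          have hne3 : w ≠ Sum.inl p' := by simp [hw, Ne.symm hppc]
          have hg := RigAux.generic_cross_ne hgen hne1 hne2 hne3
          intro h0
          apply hg
          simp only [hx, hx', Prod.fst_sub, Prod.snd_sub] at h0 ⊢
          linear_combination h0
        have hz0 : z = 0 := RigAux.eq_zero_of_two_dots hcross hdx hdx'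
        rw [hz] at hz0
        exact sub_eq_zero.1 hz0
    have hkeyp := key p hpI
    have hkeyq := key q hqI
    rw [← hup, ← hvq]
    have hmm : m (Sum.inl p) - m (Sum.inl q) = a • perp (ρ (Sum.inl p) - ρ (Sum.inl q)) := by
      have : m (Sum.inl p) - m (Sum.inl q)
          = (m (Sum.inl p) - m c) - (m (Sum.inl q) - m c) := by abel
      rw [this, hkeyp, hkeyq, ← smul_sub, ← RigAux.perp_sub]
      congr 1
      congr 1
      abel
    rw [hmm]
    exact RigAux.dot_perp _ _
  · -- two-point line
    rw [Finset.mem_image] at hs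
    obtain ⟨⟨p, ℓ⟩, hpI, rfl⟩ := hs
    simp only [Finset.mem_insert, Finset.mem_singleton] at hu hv
    have hE : s(Sum.inr ℓ, Sum.inl p) ∈ coneEdges I pc := by
      apply Finset.mem_union_left
      exact Finset.mem_image.2 ⟨(p, ℓ), hpI, rfl⟩
    rcases hu with rfl | rfl <;> rcases hv with rfl | rfl
    · exact absurd rfl hueq
    · exact hm _ _ hE
    · rw [← RigAux.dot_neg_both]
      simpa [neg_sub] using hm _ _ hE
    · exact absurd rfl hueq
end Cone

/-- **corollary.** Let `S = (P, L, I)` be a connected incidence geometry in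
which every line is incident to at least two points. If some cone graph of `S` is flexible
(not rigid) in `ℝ²`, then the cone incidence geometry `S^C` has no realization as an
infinitesimally rigid regular proper string configuration in `ℝ²`. -/
theorem no_rigid_string_config_of_flexible_cone_graph
    {P L : Type*} [Fintype P] [Fintype L] [DecidableEq P] [DecidableEq L]
    (I : Finset (P × L))
    (hconn : (incGraph I).Connected)
    (h2pts : ∀ ℓ : L, ∃ p q : P, p ≠ q ∧ (p, ℓ) ∈ I ∧ (q, ℓ) ∈ I)
    (hflex : ∃ pc : L → P, (∀ ℓ, (pc ℓ, ℓ) ∈ I) ∧ ¬ RigidGraph (coneEdges I pc)) :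
    ¬ ∃ (edges : Finset (Sym2 (P ⊕ L))) (pos : P ⊕ L → ℝ × ℝ),
        IsRegularProperStringConfig (coneLines I) edges pos ∧ InfRigid edges pos := by
  rintro ⟨edges, pos, ⟨⟨t, htedges, httree⟩, -, -⟩, hrigpos⟩
  obtain ⟨pc, hpc, hnot⟩ := hflex
  apply hnot
  intro ρ hgen m hm
  by_cases hL : Nonempty L
  · obtain ⟨ℓ0⟩ := hL
    obtain ⟨p, q, hpq, hpI, hqI⟩ := h2pts ℓ0
    have hV : ∃ u v : P ⊕ L, u ≠ v := ⟨Sum.inl p, Sum.inl q, by simp [hpq]⟩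
    have hrigρ : InfRigid edges ρ := RigAux.infRigid_of_generic hrigpos hgen hV
    apply hrigρ
    rw [htedges]
    exact cone_motion_extends I pc hpc ρ m hgen hm t httree
  · haveI : IsEmpty L := not_nonempty_iff.1 hL
    have hss : ∀ u v : P ⊕ L, u = v := by
      intro u v
      obtain ⟨wlk⟩ := hconn.preconnected u v
      cases wlk with
      | nil => rfl
      | cons hadj _ =>
        rcases hadj with ⟨p, ℓ, _, _, _⟩ | ⟨p, ℓ, _, _, _⟩ <;> exact isEmptyElim ℓ
    obtain ⟨v0⟩ : Nonempty (P ⊕ L) := hconn.nonempty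
    exact ⟨0, m v0, fun v => by rw [hss v v0]; simp⟩
end

section
/- Let S=(P,L,I) be a rank-two incidence geometry and let ρ be a proper linear realization of S in ℝ² such that the rows of the concurrence geometry matrix M(S,ρ) are linearly independent. Then I is sharply independent: every nonempty subset J ⊆ I whose support Q × M satisfies |Q| ≥ 2 obeys |J| ≤ |M| + 2|Q| − 3. -/
private lemma sum_single_mul {α : Type*} [Fintype α] [DecidableEq α]
    (a : α) (c : ℝ) (g : α → ℝ) :
    ∑ a', (Pi.single a c : α → ℝ) a' * g a' = c * g a := by
  rw [Finset.sum_eq_single a]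
  · simp
  · intro b _ hb; simp [Pi.single_eq_of_ne hb]
  · simp

private lemma sum_ite_coe {β : Type*} [Fintype β] [DecidableEq β] {s : Finset β}
    {b : β} (hb : b ∈ s) (c : ℝ) (g : β → ℝ) :
    ∑ z : {x // x ∈ s}, (if b = ↑z then c else 0) * g ↑z = c * g b := by
  rw [Finset.sum_eq_single (⟨b, hb⟩ : {x // x ∈ s})]
  · simp
  · intro z _ hz
    rw [if_neg, zero_mul]
    intro hbz
    exact hz (Subtype.ext hbz.symm)
  · simp

private lemma sum_ite_const {β : Type*} [Fintype β] [DecidableEq β] {s : Finset β}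
    {b : β} (hb : b ∈ s) (c d : ℝ) :
    ∑ z : {x // x ∈ s}, (if b = ↑z then c else 0) * d = c * d :=
  sum_ite_coe hb c (fun _ => d)


/-- Let `S = (P, L, I)` be an incidence geometry and `ρ` a proper linear
realization of `S` in `ℝ²` (with slopes `f`, intercepts `h` and injective point coordinates
`(x, y)`) such that the rows of the concurrence geometry matrix `M(S, ρ)` are linearly
independent. Then `I` is sharply independent. -/
theorem sharplyIndep_of_rows_linearIndependent
    {P L : Type*} [Fintype P] [Fintype L] [DecidableEq P] [DecidableEq L]
    (I : Finset (P × L)) (f h : L → ℝ) (x y : P → ℝ)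
    (hreal : ∀ pl ∈ I, f pl.2 * x pl.1 + y pl.1 + h pl.2 = 0)
    (hproper : Function.Injective (fun p => (x p, y p)))
    (hrows : LinearIndependent ℝ (fun e : {e // e ∈ I} => concMatrix I f e)) :
    SharplyIndep I := by
  intro J hJI hJne hQ2
  classical
  set Q : Finset P := J.image Prod.fst with hQdef
  set M : Finset L := J.image Prod.snd with hMdef
  -- the restricted-column index type
  let α : Type _ := {ℓ : L // ℓ ∈ M} ⊕ {p : P // p ∈ Q} × Bool
  -- the full row, as a plain function of the incidence
  let F : P × L → (L ⊕ P × Bool) → ℝ := fun e c =>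
    match c with
    | Sum.inl ℓ => if e.2 = ℓ then 1 else 0
    | Sum.inr (p, false) => if e.1 = p then f e.2 else 0
    | Sum.inr (p, true) => if e.1 = p then 1 else 0
  have hF : ∀ e : {e // e ∈ I}, concMatrix I f e = F e.1 := by
    intro e; funext c
    match c with
    | Sum.inl ℓ => rfl
    | Sum.inr (p, false) => rfl
    | Sum.inr (p, true) => rfl
  -- the restricted rows
  let r : {e : P × L // e ∈ J} → α → ℝ := fun e c =>
    match c with
    | Sum.inl ℓ => if e.1.2 = ℓ.1 then 1 else 0
    | Sum.inr (p, false) => if e.1.1 = p.1 then f e.1.2 else 0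
    | Sum.inr (p, true) => if e.1.1 = p.1 then 1 else 0
  have hr_li : LinearIndependent ℝ r := by
    rw [Fintype.linearIndependent_iff]
    intro cc hcc
    -- extend the coefficients to I
    set g : {e : P × L // e ∈ I} → ℝ :=
      fun e => if hh : e.1 ∈ J then cc ⟨e.1, hh⟩ else 0 with hgdef
    have key : ∑ e : {e // e ∈ I}, g e • (fun e' : {e // e ∈ I} => concMatrix I f e') e = 0 := by
      have h1 : ∑ e : {e // e ∈ I}, g e • (fun e' : {e // e ∈ I} => concMatrix I f e') e
          = ∑ e ∈ I, (if hh : e ∈ J then cc ⟨e, hh⟩ else 0) • F e := by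
        rw [← Finset.sum_attach I (fun e => (if hh : e ∈ J then cc ⟨e, hh⟩ else 0) • F e)]
        exact Finset.sum_congr rfl (fun e _ => by simp only [hF]; rfl)
      have h2 : ∑ e ∈ I, (if hh : e ∈ J then cc ⟨e, hh⟩ else 0) • F e
          = ∑ e ∈ J, (if hh : e ∈ J then cc ⟨e, hh⟩ else 0) • F e := by
        refine (Finset.sum_subset hJI ?_).symm
        intro e _ heJ
        rw [dif_neg heJ, zero_smul]
      have h3 : ∑ e ∈ J, (if hh : e ∈ J then cc ⟨e, hh⟩ else 0) • F e
          = ∑ e : {e // e ∈ J}, cc e • F e.1 := by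
        rw [← Finset.sum_attach J (fun e => (if hh : e ∈ J then cc ⟨e, hh⟩ else 0) • F e)]
        exact Finset.sum_congr rfl (fun e _ => by rw [dif_pos e.2])
      rw [h1, h2, h3]
      funext k
      rw [Finset.sum_apply]
      match k with
      | Sum.inl ℓ =>
        by_cases hℓ : ℓ ∈ M
        · have := congrFun hcc (Sum.inl ⟨ℓ, hℓ⟩)
          rw [Finset.sum_apply] at this
          simpa [r, F] using this
        · refine Finset.sum_eq_zero fun e _ => ?_
          have : e.1.2 ≠ ℓ := fun hc => hℓ (hc ▸ Finset.mem_image_of_mem Prod.snd e.2)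
          simp [F, this]
      | Sum.inr (p, b) =>
        by_cases hp : p ∈ Q
        · have := congrFun hcc (Sum.inr (⟨p, hp⟩, b))
          rw [Finset.sum_apply] at this
          cases b
          · simpa [r, F] using this
          · simpa [r, F] using this
        · refine Finset.sum_eq_zero fun e _ => ?_
          have : e.1.1 ≠ p := fun hc => hp (hc ▸ Finset.mem_image_of_mem Prod.fst e.2)
          cases b <;> simp [F, this]
    have hg0 := Fintype.linearIndependent_iff.mp hrows g key
    intro e
    have := hg0 ⟨e.1, hJI e.2⟩
    simp only [hgdef, dif_pos e.2] at this
    simpa using this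
  -- the three annihilated column vectors
  let w : Fin 3 → α → ℝ := fun i c =>
    match c with
    | Sum.inl ℓ => ![h ℓ.1, -1, -f ℓ.1] i
    | Sum.inr (p, false) => ![x p.1, 0, 1] i
    | Sum.inr (p, true) => ![y p.1, 1, 0] i
  -- the pairing map
  let T : (α → ℝ) →ₗ[ℝ] (Fin 3 → ℝ) :=
    { toFun := fun v i => ∑ a, v a * w i a
      map_add' := by
        intro v v'; funext i
        simp [add_mul, Finset.sum_add_distrib]
      map_smul' := by
        intro c v; funext i
        simp [Finset.mul_sum, mul_assoc] }
  have hT : ∀ (v : α → ℝ) (i : Fin 3), T v i = ∑ a, v a * w i a := fun _ _ => rfl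
  -- the rows lie in the kernel of T
  have hker : ∀ e : {e // e ∈ J}, r e ∈ LinearMap.ker T := by
    intro e
    rw [LinearMap.mem_ker]
    funext i
    have hm : e.1.2 ∈ M := Finset.mem_image_of_mem Prod.snd e.2
    have hq : e.1.1 ∈ Q := Finset.mem_image_of_mem Prod.fst e.2
    have hzero := hreal e.1 (hJI e.2)
    rw [hT]
    rw [Fintype.sum_sum_type, Fintype.sum_prod_type]
    simp only [Fintype.sum_bool]
    rw [Finset.sum_add_distrib]
    fin_cases i
    · show (∑ z : {ℓ // ℓ ∈ M}, (if (↑e : P × L).2 = ↑z then (1:ℝ) else 0) * h ↑z)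
        + ((∑ z : {p' // p' ∈ Q}, (if (↑e : P × L).1 = ↑z then (1:ℝ) else 0) * y ↑z)
          + (∑ z : {p' // p' ∈ Q},
              (if (↑e : P × L).1 = ↑z then f (↑e : P × L).2 else 0) * x ↑z)) = 0
      rw [sum_ite_coe hm, sum_ite_coe hq, sum_ite_coe hq]
      linarith
    · show (∑ z : {ℓ // ℓ ∈ M}, (if (↑e : P × L).2 = ↑z then (1:ℝ) else 0) * (-1 : ℝ))
        + ((∑ z : {p' // p' ∈ Q}, (if (↑e : P × L).1 = ↑z then (1:ℝ) else 0) * (1:ℝ))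
          + (∑ z : {p' // p' ∈ Q},
              (if (↑e : P × L).1 = ↑z then f (↑e : P × L).2 else 0) * (0:ℝ))) = 0
      rw [sum_ite_const hm, sum_ite_const hq, sum_ite_const hq]
      ring
    · show (∑ z : {ℓ // ℓ ∈ M}, (if (↑e : P × L).2 = ↑z then (1:ℝ) else 0) * (-f ↑z))
        + ((∑ z : {p' // p' ∈ Q}, (if (↑e : P × L).1 = ↑z then (1:ℝ) else 0) * (0:ℝ))
          + (∑ z : {p' // p' ∈ Q},
              (if (↑e : P × L).1 = ↑z then f (↑e : P × L).2 else 0) * (1:ℝ))) = 0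
      rw [sum_ite_coe hm 1 (fun ℓ => -f ℓ), sum_ite_const hq, sum_ite_const hq]
      ring
  -- T is surjective
  have hsurj : Function.Surjective T := by
    intro u
    obtain ⟨p, hp, q, hq, hpq⟩ := Finset.one_lt_card.mp hQ2
    have hxy : x p ≠ x q ∨ y p ≠ y q := by
      by_contra hc
      push_neg at hc
      exact hpq (hproper (Prod.ext hc.1 hc.2))
    have Tsingle : ∀ (a : α) (c : ℝ), T (Pi.single a c) = fun i => c * w i a := by
      intro a c; funext i
      rw [hT, sum_single_mul]
    rcases hxy with hx | hy
    · have hx' : x p - x q ≠ 0 := sub_ne_zero.mpr hx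
      set t : ℝ := (u 0 - u 2 * x q - u 1 * y p) / (x p - x q) with ht
      refine ⟨Pi.single (Sum.inr (⟨p, hp⟩, false)) t
        + Pi.single (Sum.inr (⟨q, hq⟩, false)) (u 2 - t)
        + Pi.single (Sum.inr (⟨p, hp⟩, true)) (u 1), ?_⟩
      rw [map_add, map_add, Tsingle, Tsingle, Tsingle]
      funext i
      fin_cases i
      · show t * x p + (u 2 - t) * x q + u 1 * y p = u 0
        rw [ht]
        field_simp
        ring
      · show t * 0 + (u 2 - t) * 0 + u 1 * 1 = u 1
        ring
      · show t * 1 + (u 2 - t) * 1 + u 1 * 0 = u 2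
        ring
    · have hy' : y p - y q ≠ 0 := sub_ne_zero.mpr hy
      set t : ℝ := (u 0 - u 2 * x p - u 1 * y q) / (y p - y q) with ht
      refine ⟨Pi.single (Sum.inr (⟨p, hp⟩, true)) t
        + Pi.single (Sum.inr (⟨q, hq⟩, true)) (u 1 - t)
        + Pi.single (Sum.inr (⟨p, hp⟩, false)) (u 2), ?_⟩
      rw [map_add, map_add, Tsingle, Tsingle, Tsingle]
      funext i
      fin_cases i
      · show t * y p + (u 1 - t) * y q + u 2 * x p = u 0
        rw [ht]
        field_simp
        ring
      · show t * 1 + (u 1 - t) * 1 + u 2 * 0 = u 1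
        ring
      · show t * 0 + (u 1 - t) * 0 + u 2 * 1 = u 2
        ring
  -- dimension count
  have hli' : LinearIndependent ℝ
      (fun e : {e // e ∈ J} => (⟨r e, hker e⟩ : LinearMap.ker T)) := by
    apply LinearIndependent.of_comp (LinearMap.ker T).subtype
    exact hr_li
  have h1 : Fintype.card {e // e ∈ J} ≤ Module.finrank ℝ (LinearMap.ker T) :=
    hli'.fintype_card_le_finrank
  have h2 : Module.finrank ℝ (LinearMap.range T) + Module.finrank ℝ (LinearMap.ker T)
      = Module.finrank ℝ (α → ℝ) := LinearMap.finrank_range_add_finrank_ker T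
  have h3 : Module.finrank ℝ (LinearMap.range T) = 3 := by
    rw [LinearMap.range_eq_top.mpr hsurj, finrank_top]
    simp [Module.finrank_pi]
  have h4 : Module.finrank ℝ (α → ℝ) = M.card + 2 * Q.card := by
    rw [Module.finrank_pi]
    simp [α, Fintype.card_sum, Fintype.card_prod, Fintype.card_coe]
    ring
  have h5 : J.card + 3 ≤ M.card + 2 * Q.card := by
    have := Fintype.card_coe J
    omega
  have : (J.card : ℤ) + 3 ≤ (M.card : ℤ) + 2 * Q.card := by exact_mod_cast h5
  omega
end

section
/- Let G=(V,E) be a graph that is rigid in ℝ², and let c, p, p', q be four distinct vertices of G such that the edges (c,p), (c,p'), (c,q), (p,p') and (p,q) all belong to E. Then the graph G₁ = (V, (E \ {(p,q)}) ∪ {(p',q)}) obtained by replacing the edge (p,q) with the edge (p',q) is rigid in ℝ². -/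
open MvPolynomial in
/-- Three distinct points of a generic framework are never collinear. -/
lemma generic_noncollinear {V : Type*} [DecidableEq V] {ρ : V → ℝ × ℝ} (hg : Generic ρ)
    {u v w : V} (huv : u ≠ v) (huw : u ≠ w) (hvw : v ≠ w) :
    ((ρ v).1 - (ρ u).1) * ((ρ w).2 - (ρ u).2)
      - ((ρ v).2 - (ρ u).2) * ((ρ w).1 - (ρ u).1) ≠ 0 := by
  set x : V × Bool → ℝ := fun p => if p.2 then (ρ p.1).1 else (ρ p.1).2 with hx
  have hinj : Function.Injective (aeval x : MvPolynomial (V × Bool) ℚ →ₐ[ℚ] ℝ) := hg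
  set P : MvPolynomial (V × Bool) ℚ :=
    (X (v, true) - X (u, true)) * (X (w, false) - X (u, false))
      - (X (v, false) - X (u, false)) * (X (w, true) - X (u, true)) with hP
  intro h
  have hev : aeval x P = 0 := by
    simp only [hP, map_sub, map_mul, aeval_X]
    simp only [hx, if_pos, if_neg]
    simpa using h
  have hP0 : P = 0 := hinj (by simpa using hev)
  have : eval (fun s : V × Bool => if s = (v, true) ∨ s = (w, false) then (1:ℚ) else 0) P = 0 := by
    rw [hP0]; simp
  rw [hP] at this
  simp only [map_sub, map_mul, eval_X] at this
  simp [Prod.ext_iff, huv, huw, hvw, huv.symm, huw.symm, hvw.symm] at this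

/-- The K₄ self-stress identity: if `D` is an affine combination of `A,B,C` with
coefficient `β ≠ 0` on `B`, and the five dot constraints on edges `AB,AC,AD,BC,CD`
hold, then the constraint on `BD` holds too. -/
lemma K4_exchange (a1 a2 b1 b2 c1 c2 d1 d2 ma1 ma2 mb1 mb2 mc1 mc2 md1 md2 β γ : ℝ)
    (h1 : d1 = (1 - β - γ) * a1 + β * b1 + γ * c1)
    (h2 : d2 = (1 - β - γ) * a2 + β * b2 + γ * c2)
    (hβ : β ≠ 0)
    (eAB : (a1 - b1) * (ma1 - mb1) + (a2 - b2) * (ma2 - mb2) = 0)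
    (eAC : (a1 - c1) * (ma1 - mc1) + (a2 - c2) * (ma2 - mc2) = 0)
    (eAD : (a1 - d1) * (ma1 - md1) + (a2 - d2) * (ma2 - md2) = 0)
    (eBC : (b1 - c1) * (mb1 - mc1) + (b2 - c2) * (mb2 - mc2) = 0)
    (eCD : (c1 - d1) * (mc1 - md1) + (c2 - d2) * (mc2 - md2) = 0) :
    (b1 - d1) * (mb1 - md1) + (b2 - d2) * (mb2 - md2) = 0 := by
  subst h1 h2
  apply mul_left_cancel₀ hβ
  rw [mul_zero]
  linear_combination ((1 - β - γ) * β) * eAB + ((1 - β - γ) * γ) * eAC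
    + (-(1 - β - γ)) * eAD + (β * γ) * eBC + (-γ) * eCD

/-- Let `G = (V, E)` be a graph that is rigid in `ℝ²` and let
`c, p, p', q` be four distinct vertices of `G` such that the edges `(c, p)`, `(c, p')`,
`(c, q)`, `(p, p')` and `(p, q)` all belong to `E`. Then the graph obtained by replacing
the edge `(p, q)` with the edge `(p', q)` is rigid in `ℝ²`. -/
theorem rigid_of_edge_exchange {V : Type*} [DecidableEq V]
    (E : Finset (Sym2 V)) (c p p' q : V)
    (hdistinct : [c, p, p', q].Pairwise (· ≠ ·))
    (hcp : s(c, p) ∈ E) (hcp' : s(c, p') ∈ E) (hcq : s(c, q) ∈ E)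
    (hpp' : s(p, p') ∈ E) (hpq : s(p, q) ∈ E)
    (hrig : RigidGraph E) :
    RigidGraph (insert s(p', q) (E.erase s(p, q))) := by
  have hd := hdistinct
  simp only [List.pairwise_cons, List.mem_cons, List.not_mem_nil, List.mem_singleton] at hd
  obtain ⟨hA, hB, hC, -⟩ := hd
  have hcp0 : c ≠ p := hA p (Or.inl rfl)
  have hcp'0 : c ≠ p' := hA p' (Or.inr (Or.inl rfl))
  have hcq0 : c ≠ q := hA q (Or.inr (Or.inr (Or.inl rfl)))
  have hpp'0 : p ≠ p' := hB p' (Or.inl rfl)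
  have hpq0 : p ≠ q := hB q (Or.inr (Or.inl rfl))
  have hp'q0 : p' ≠ q := hC q (Or.inl rfl)
  intro ρ hgen m hm
  -- membership of the surviving edges in the new edge set
  have mem_new : ∀ e ∈ E, e ≠ s(p, q) → e ∈ insert s(p', q) (E.erase s(p, q)) :=
    fun e he hne => Finset.mem_insert_of_mem (Finset.mem_erase.mpr ⟨hne, he⟩)
  have eAB := hm c p (mem_new _ hcp (by simp [Sym2.eq_iff]; tauto))
  have eAC := hm c p' (mem_new _ hcp' (by simp [Sym2.eq_iff]; tauto))
  have eAD := hm c q (mem_new _ hcq (by simp [Sym2.eq_iff]; tauto))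
  have eBC := hm p p' (mem_new _ hpp' (by simp [Sym2.eq_iff]; tauto))
  have eCD := hm p' q (Finset.mem_insert_self _ _)
  simp only [dot, Prod.fst_sub, Prod.snd_sub] at eAB eAC eAD eBC eCD
  -- genericity gives noncollinearity
  have hS := generic_noncollinear hgen hcp0 hcp'0 hpp'0
  have hN := generic_noncollinear hgen hcq0 hcp'0 (fun h => hp'q0 h.symm)
  set S : ℝ := ((ρ p).1 - (ρ c).1) * ((ρ p').2 - (ρ c).2)
      - ((ρ p).2 - (ρ c).2) * ((ρ p').1 - (ρ c).1) with hSdef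
  set N : ℝ := ((ρ q).1 - (ρ c).1) * ((ρ p').2 - (ρ c).2)
      - ((ρ q).2 - (ρ c).2) * ((ρ p').1 - (ρ c).1) with hNdef
  set G : ℝ := ((ρ p).1 - (ρ c).1) * ((ρ q).2 - (ρ c).2)
      - ((ρ p).2 - (ρ c).2) * ((ρ q).1 - (ρ c).1) with hGdef
  set β : ℝ := N / S with hβdef
  set γ : ℝ := G / S with hγdef
  have hβ : β ≠ 0 := div_ne_zero hN hS
  have h1 : (ρ q).1 = (1 - β - γ) * (ρ c).1 + β * (ρ p).1 + γ * (ρ p').1 := by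
    rw [hβdef, hγdef, hNdef, hGdef]; field_simp; ring
  have h2 : (ρ q).2 = (1 - β - γ) * (ρ c).2 + β * (ρ p).2 + γ * (ρ p').2 := by
    rw [hβdef, hγdef, hNdef, hGdef]; field_simp; ring
  -- the key derived constraint on the removed edge (p, q)
  have key : dot (ρ p - ρ q) (m p - m q) = 0 := by
    simp only [dot, Prod.fst_sub, Prod.snd_sub]
    exact K4_exchange (ρ c).1 (ρ c).2 (ρ p).1 (ρ p).2 (ρ p').1 (ρ p').2 (ρ q).1 (ρ q).2
      (m c).1 (m c).2 (m p).1 (m p).2 (m p').1 (m p').2 (m q).1 (m q).2 β γ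
      h1 h2 hβ eAB eAC eAD eBC eCD
  -- hence m is a motion of the original graph, which is rigid
  apply hrig ρ hgen m
  intro u v huv
  by_cases h : s(u, v) = s(p, q)
  · rcases Sym2.eq_iff.mp h with ⟨hu, hv⟩ | ⟨hu, hv⟩
    · subst hu; subst hv; exact key
    · subst hu; subst hv
      simp only [dot, Prod.fst_sub, Prod.snd_sub] at key ⊢
      linarith
  · exact hm u v (mem_new _ huv h)
end
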